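/- arXiv:1703.00422 — 4 statements merged into one kernel-verified Lean document; each statement's English description precedes it below -/
import Mathlib

section
/- Suppose the continuous linear map A : E × ℂ → F × ℂ defined by A(φ, a) = (Sφ + a•c, ℓφ) is bijective. Then the linear subspace 𝒞 := {φ ∈ E : ∃ α ∈ ℂ, Sφ = α•c} of E is one-dimensional, i.e. finrank_ℂ 𝒞 = 1. -/
namespace BorderedMap

variable {K E F : Type*} [Field K] [AddCommGroup E] [Module K E] [AddCommGroup F] [Module K F]

def borderedMap (S : E →ₗ[K] F) (ℓ : E →ₗ[K] K) (c : F) : E × K →ₗ[K] F × K :=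
  (S.coprod (LinearMap.toSpanSingleton K F c)).prod (ℓ ∘ₗ LinearMap.fst K E K)

variable {S : E →ₗ[K] F} {ℓ : E →ₗ[K] K} {c : F}

@[simp]
theorem borderedMap_apply (φ : E) (a : K) : borderedMap S ℓ c (φ, a) = (S φ + a • c, ℓ φ) :=
  rfl

variable {φ₀ : E} {a₀ : K}

/-- `(φ, -α)` and `ℓ φ • (φ₀, a₀)` have the same image `(0, ℓ φ)`. -/
theorem eq_smul_of_mem_comap_span_singleton (hinj : Function.Injective (borderedMap S ℓ c))
    (h₀ : borderedMap S ℓ c (φ₀, a₀) = (0, 1)) {φ : E} (hφ : φ ∈ (K ∙ c).comap S) :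
    φ = ℓ φ • φ₀ := by
  obtain ⟨α, hα⟩ := Submodule.mem_span_singleton.mp hφ
  have himage : borderedMap S ℓ c (φ, -α) = borderedMap S ℓ c (ℓ φ • (φ₀, a₀)) := by
    rw [map_smul, h₀, borderedMap_apply, ← hα]
    simp
  exact congrArg Prod.fst (hinj himage)

theorem comap_span_singleton_eq_span_singleton (hinj : Function.Injective (borderedMap S ℓ c))
    (h₀ : borderedMap S ℓ c (φ₀, a₀) = (0, 1)) :
    (K ∙ c).comap S = K ∙ φ₀ := by
  apply le_antisymm
  · intro φ hφ
    rw [eq_smul_of_mem_comap_span_singleton hinj h₀ hφ]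
    exact Submodule.smul_mem _ _ (Submodule.mem_span_singleton_self φ₀)
  · rw [Submodule.span_le, Set.singleton_subset_iff]
    have hS : S φ₀ + a₀ • c = 0 := congrArg Prod.fst h₀
    exact Submodule.mem_span_singleton.mpr ⟨-a₀, by rw [neg_smul, ← eq_neg_of_add_eq_zero_left hS]⟩

theorem finrank_comap_span_singleton_eq_one (hbij : Function.Bijective (borderedMap S ℓ c)) :
    Module.finrank K ((K ∙ c).comap S) = 1 := by
  obtain ⟨⟨φ₀, a₀⟩, h₀⟩ := hbij.2 (0, 1)
  have hφ₀ : φ₀ ≠ 0 := by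
    rintro rfl
    simpa using congrArg Prod.snd h₀
  rw [comap_span_singleton_eq_span_singleton hbij.1 h₀, finrank_span_singleton hφ₀]

end BorderedMap

open BorderedMap in
theorem stmt_0_general
    {E F : Type*} [NormedAddCommGroup E] [NormedSpace ℂ E]
    [NormedAddCommGroup F] [NormedSpace ℂ F]
    (S : E →L[ℂ] F) (ℓ : E →L[ℂ] ℂ) (c : F)
    (A : (E × ℂ) →L[ℂ] (F × ℂ))
    (hA : ∀ (φ : E) (a : ℂ), A (φ, a) = (S φ + a • c, ℓ φ))
    (hbij : Function.Bijective A)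
    (𝒞 : Submodule ℂ E)
    (h𝒞 : ∀ φ : E, φ ∈ 𝒞 ↔ ∃ α : ℂ, S φ = α • c) :
    Module.finrank ℂ 𝒞 = 1 := by
  have hA' : ⇑A = borderedMap (S : E →ₗ[ℂ] F) (ℓ : E →ₗ[ℂ] ℂ) c := funext fun ⟨φ, a⟩ => hA φ a
  have h𝒞' : 𝒞 = (ℂ ∙ c).comap (S : E →ₗ[ℂ] F) := by
    ext φ
    simp only [h𝒞, Submodule.mem_comap, Submodule.mem_span_singleton, ContinuousLinearMap.coe_coe,
      eq_comm]
  rw [hA'] at hbij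
  rw [h𝒞']
  exact finrank_comap_span_singleton_eq_one hbij

/-- If the continuous linear map `A : E × ℂ → F × ℂ`, `A(φ, a) = (Sφ + a•c, ℓφ)`, is
bijective, then the subspace `𝒞 = {φ : ∃ α, Sφ = α•c}` of `E` is one-dimensional. -/
theorem stmt_0
    {E F : Type*} [NormedAddCommGroup E] [NormedSpace ℂ E] [CompleteSpace E]
    [NormedAddCommGroup F] [NormedSpace ℂ F] [CompleteSpace F]
    (S : E →L[ℂ] F) (ℓ : E →L[ℂ] ℂ) (c : F)
    (A : (E × ℂ) →L[ℂ] (F × ℂ))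
    (hA : ∀ (φ : E) (a : ℂ), A (φ, a) = (S φ + a • c, ℓ φ))
    (hbij : Function.Bijective A)
    (𝒞 : Submodule ℂ E)
    (h𝒞 : ∀ φ : E, φ ∈ 𝒞 ↔ ∃ α : ℂ, S φ = α • c) :
    Module.finrank ℂ 𝒞 = 1 :=
  stmt_0_general S ℓ c A hA hbij 𝒞 h𝒞
end

section
/- The modified operator S̃ : E → F defined by S̃φ := S(φ − (ℓφ)•φ₀) − (ℓφ)•c is bijective. -/
/-!
`S̃ = T + (K - ℓ(·) • (Sφ₀ + c))` is an invertible operator plus a compact one, so by the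
Fredholm alternative it is bijective as soon as it is injective. If `S̃φ = 0`, then
`S(φ - (ℓφ)φ₀)` is a multiple of `c`, so `φ - (ℓφ)φ₀ = βφ₀`; applying `ℓ` gives `β = 0`,
hence `(ℓφ)c = S 0 = 0`, so `ℓφ = 0` and `φ = 0`.
-/

theorem ContinuousLinearMap.isCompactOperator_smulRight {𝕜 E F : Type*}
    [NontriviallyNormedField 𝕜] [LocallyCompactSpace 𝕜]
    [NormedAddCommGroup E] [NormedSpace 𝕜 E] [NormedAddCommGroup F] [NormedSpace 𝕜 F]
    (ℓ : E →L[𝕜] 𝕜) (v : F) : IsCompactOperator (ℓ.smulRight v) :=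
  (isCompactOperator_of_locallyCompactSpace_dom ℓ).continuous_comp
    (continuous_id.smul continuous_const)

theorem bijective_of_injective_add_isCompactOperator {𝕜 E F : Type*}
    [NontriviallyNormedField 𝕜]
    [NormedAddCommGroup E] [NormedSpace 𝕜 E] [CompleteSpace E]
    [NormedAddCommGroup F] [NormedSpace 𝕜 F]
    (T : E ≃L[𝕜] F) {K : E →L[𝕜] F} (hK : IsCompactOperator K)
    (hinj : Function.Injective (T + K : E →L[𝕜] F)) :
    Function.Bijective (T + K : E →L[𝕜] F) := by
  set A : E →L[𝕜] E := (T.symm : F →L[𝕜] E) ∘L K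
  have hA : IsCompactOperator A := hK.clm_comp (T.symm : F →L[𝕜] E)
  have hfactor : (T + K : E →L[𝕜] F) = (T : E →L[𝕜] F) ∘L (A - (-1 : 𝕜) • 1) := by
    ext x
    simp [A, add_comm]
  rw [hfactor, ContinuousLinearMap.coe_comp, T.coe_coe] at hinj ⊢
  have hnot : ¬ Module.End.HasEigenvalue (A : Module.End 𝕜 E) (-1) := by
    intro h
    obtain ⟨x, hx⟩ := h.exists_hasEigenvector
    have hAx : A x = -x := by simpa using hx.apply_eq_smul
    exact hx.2 (hinj (by simp [hAx]))
  have hres := (hA.hasEigenvalue_or_mem_resolventSet (neg_ne_zero.2 one_ne_zero)).resolve_left hnot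
  rw [spectrum.mem_resolventSet_iff, ← IsUnit.neg_iff, neg_sub, Algebra.algebraMap_eq_smul_one,
    ContinuousLinearMap.isUnit_iff_bijective] at hres
  exact T.bijective.comp hres

theorem injective_of_apply_eq_sub_smul {𝕜 E F : Type*} [Field 𝕜]
    [AddCommGroup E] [Module 𝕜 E] [AddCommGroup F] [Module 𝕜 F]
    (S : E →ₗ[𝕜] F) (ℓ : E →ₗ[𝕜] 𝕜) {c : F} (hc : c ≠ 0) {φ₀ : E} (hφ₀ : ℓ φ₀ = 1)
    (hker : ∀ φ : E, (∃ α : 𝕜, S φ = α • c) → ∃ β : 𝕜, φ = β • φ₀)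
    (Stilde : E →ₗ[𝕜] F) (hStilde : ∀ φ : E, Stilde φ = S (φ - ℓ φ • φ₀) - ℓ φ • c) :
    Function.Injective Stilde := by
  refine (injective_iff_map_eq_zero Stilde).2 fun φ hφ => ?_
  have hS : S (φ - ℓ φ • φ₀) = ℓ φ • c := by rwa [hStilde, sub_eq_zero] at hφ
  obtain ⟨β, hβ⟩ := hker _ ⟨ℓ φ, hS⟩
  have hβ0 : β = 0 := by simpa [hφ₀] using (congrArg ℓ hβ).symm
  rw [hβ0, zero_smul] at hβ
  have hℓφ : ℓ φ = 0 := by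
    rw [hβ, map_zero, eq_comm, smul_eq_zero] at hS
    exact hS.resolve_right hc
  simpa [hℓφ] using hβ

theorem stmt_2_general
    {E F : Type*} [NormedAddCommGroup E] [NormedSpace ℂ E] [CompleteSpace E]
    [NormedAddCommGroup F] [NormedSpace ℂ F]
    (T : E ≃L[ℂ] F) (K : E →L[ℂ] F) (hK : IsCompactOperator (⇑K))
    (S : E →L[ℂ] F) (hS : ∀ φ : E, S φ = T φ + K φ)
    (ℓ : E →L[ℂ] ℂ) (c : F) (hc : c ≠ 0)
    (φ₀ : E) (hφ₀ : ℓ φ₀ = 1)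
    (hker : ∀ φ : E, (∃ α : ℂ, S φ = α • c) ↔ ∃ β : ℂ, φ = β • φ₀)
    (Stilde : E →L[ℂ] F)
    (hStilde : ∀ φ : E, Stilde φ = S (φ - ℓ φ • φ₀) - ℓ φ • c) :
    Function.Bijective Stilde := by
  have hinj : Function.Injective Stilde :=
    injective_of_apply_eq_sub_smul (S : E →ₗ[ℂ] F) (ℓ : E →ₗ[ℂ] ℂ) hc hφ₀ (fun φ => (hker φ).1)
      (Stilde : E →ₗ[ℂ] F) hStilde
  have hdecomp : Stilde = T + (K - ℓ.smulRight (S φ₀ + c)) := by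
    ext φ
    simp only [hStilde, map_sub, map_smul, hS, add_apply, sub_apply,
      ContinuousLinearMap.smulRight_apply, ContinuousLinearEquiv.coe_coe, smul_add]
    abel
  rw [hdecomp] at hinj ⊢
  exact bijective_of_injective_add_isCompactOperator T
    (hK.sub (ℓ.isCompactOperator_smulRight _)) hinj

/-- The modified operator `S̃φ := S(φ − (ℓφ)•φ₀) − (ℓφ)•c` is bijective, where
`S = T + K` with `T` invertible and `K` compact, `c ≠ 0`, `ℓφ₀ = 1` and
`{φ : ∃ α, Sφ = α•c} = ℂ•φ₀`. -/
theorem stmt_2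
    {E F : Type*} [NormedAddCommGroup E] [NormedSpace ℂ E] [CompleteSpace E]
    [NormedAddCommGroup F] [NormedSpace ℂ F] [CompleteSpace F]
    (T : E ≃L[ℂ] F) (K : E →L[ℂ] F) (hK : IsCompactOperator (⇑K))
    (S : E →L[ℂ] F) (hS : ∀ φ : E, S φ = T φ + K φ)
    (ℓ : E →L[ℂ] ℂ) (c : F) (hc : c ≠ 0)
    (φ₀ : E) (hφ₀ : ℓ φ₀ = 1)
    (hker : ∀ φ : E, (∃ α : ℂ, S φ = α • c) ↔ ∃ β : ℂ, φ = β • φ₀)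
    (Stilde : E →L[ℂ] F)
    (hStilde : ∀ φ : E, Stilde φ = S (φ - ℓ φ • φ₀) - ℓ φ • c) :
    Function.Bijective Stilde :=
  stmt_2_general T K hK S hS ℓ c hc φ₀ hφ₀ hker Stilde hStilde
end

section
/- Assume in addition that B(ψ, Sψ) < 0 for every nonzero ψ ∈ E with ℓψ = 0. Then B(φ, S̃φ) < 0 for every nonzero φ ∈ E, i.e. the modified operator S̃ is negative for the pairing B. -/
/-!
Write `φ = ψ + t • φ₀` with `t = ℓ φ` and `ψ = φ - t • φ₀` of mean zero, so that `S̃ φ = S ψ - t • c`.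
The cross term `B φ₀ (S ψ)` equals `B ψ (S φ₀) = α₀ ℓ ψ = 0` by symmetry, hence
`B(φ, S̃φ) = B(ψ, Sψ) - t²`. Both terms are nonpositive, and they cannot both vanish unless `φ = 0`.
-/

namespace ModifiedSingleLayer

variable {R E F : Type*} [CommRing R] [AddCommGroup E] [Module R E] [AddCommGroup F] [Module R F]
  {S : E →ₗ[R] F} {ℓ : E →ₗ[R] R} {c : F} {B : E →ₗ[R] F →ₗ[R] R} {φ₀ : E} {α₀ : R}

theorem apply_sub_apply_smul_eq_zero (hφ₀ : ℓ φ₀ = 1) (φ : E) : ℓ (φ - ℓ φ • φ₀) = 0 := by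
  simp [hφ₀]

theorem apply_map_eq_zero_of_apply_eq_zero (hsym : ∀ φ ψ : E, B φ (S ψ) = B ψ (S φ))
    (hBc : ∀ φ : E, B φ c = ℓ φ) (hSφ₀ : S φ₀ = α₀ • c) {ψ : E} (hψ : ℓ ψ = 0) :
    B φ₀ (S ψ) = 0 := by
  rw [hsym, hSφ₀, map_smul, hBc, hψ, smul_zero]

theorem apply_modified_eq (hsym : ∀ φ ψ : E, B φ (S ψ) = B ψ (S φ))
    (hBc : ∀ φ : E, B φ c = ℓ φ) (hφ₀ : ℓ φ₀ = 1) (hSφ₀ : S φ₀ = α₀ • c) (φ : E) :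
    B φ (S (φ - ℓ φ • φ₀) - ℓ φ • c) = B (φ - ℓ φ • φ₀) (S (φ - ℓ φ • φ₀)) - ℓ φ ^ 2 := by
  set t := ℓ φ
  set ψ := φ - t • φ₀
  have hψ : ℓ ψ = 0 := apply_sub_apply_smul_eq_zero hφ₀ φ
  have hcross : B φ₀ (S ψ) = 0 := apply_map_eq_zero_of_apply_eq_zero hsym hBc hSφ₀ hψ
  have hφ : φ = ψ + t • φ₀ := (sub_add_cancel φ _).symm
  rw [hφ]
  simp only [map_sub, map_add, map_smul, LinearMap.add_apply, LinearMap.smul_apply, hcross, hBc,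
    hψ, hφ₀, smul_eq_mul]
  ring

theorem apply_modified_neg [LinearOrder R] [IsStrictOrderedRing R]
    (hsym : ∀ φ ψ : E, B φ (S ψ) = B ψ (S φ)) (hBc : ∀ φ : E, B φ c = ℓ φ)
    (hφ₀ : ℓ φ₀ = 1) (hSφ₀ : S φ₀ = α₀ • c)
    (hneg : ∀ ψ : E, ψ ≠ 0 → ℓ ψ = 0 → B ψ (S ψ) < 0) {φ : E} (hφ : φ ≠ 0) :
    B φ (S (φ - ℓ φ • φ₀) - ℓ φ • c) < 0 := by
  rw [apply_modified_eq hsym hBc hφ₀ hSφ₀]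
  by_cases hψ : φ - ℓ φ • φ₀ = 0
  · have ht : ℓ φ ≠ 0 := fun ht ↦ hφ (by rwa [ht, zero_smul, sub_zero] at hψ)
    rw [hψ, map_zero, map_zero, LinearMap.zero_apply, zero_sub, neg_neg_iff_pos]
    exact sq_pos_of_ne_zero ht
  · have := hneg _ hψ (apply_sub_apply_smul_eq_zero hφ₀ φ)
    linarith [sq_nonneg (ℓ φ)]

end ModifiedSingleLayer

theorem stmt_4_general
    {E F : Type*} [NormedAddCommGroup E] [NormedSpace ℝ E]
    [NormedAddCommGroup F] [NormedSpace ℝ F]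
    (S : E →L[ℝ] F) (ℓ : E →L[ℝ] ℝ) (c : F)
    (B : E →L[ℝ] F →L[ℝ] ℝ)
    (hsym : ∀ φ ψ : E, B φ (S ψ) = B ψ (S φ))
    (hBc : ∀ φ : E, B φ c = ℓ φ)
    (φ₀ : E) (α₀ : ℝ) (hφ₀ : ℓ φ₀ = 1) (hSφ₀ : S φ₀ = α₀ • c)
    (Stilde : E →L[ℝ] F)
    (hStilde : ∀ φ : E, Stilde φ = S (φ - ℓ φ • φ₀) - ℓ φ • c)
    (hneg : ∀ ψ : E, ψ ≠ 0 → ℓ ψ = 0 → B ψ (S ψ) < 0) :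
    ∀ φ : E, φ ≠ 0 → B φ (Stilde φ) < 0 := fun φ hφ ↦ by
  rw [hStilde]
  exact ModifiedSingleLayer.apply_modified_neg (S := S.toLinearMap) (ℓ := ℓ.toLinearMap)
    (B := ContinuousLinearMap.toLinearMap₁₂ B) hsym hBc hφ₀ hSφ₀ hneg hφ

/-- If `B(ψ, Sψ) < 0` for every nonzero mean-zero `ψ`, then the modified operator
`S̃φ := S(φ − (ℓφ)•φ₀) − (ℓφ)•c` is negative for the pairing `B`:
`B(φ, S̃φ) < 0` for every nonzero `φ`. -/
theorem stmt_4
    {E F : Type*} [NormedAddCommGroup E] [NormedSpace ℝ E] [CompleteSpace E]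
    [NormedAddCommGroup F] [NormedSpace ℝ F] [CompleteSpace F]
    (S : E →L[ℝ] F) (ℓ : E →L[ℝ] ℝ) (c : F)
    (B : E →L[ℝ] F →L[ℝ] ℝ)
    (hsym : ∀ φ ψ : E, B φ (S ψ) = B ψ (S φ))
    (hBc : ∀ φ : E, B φ c = ℓ φ)
    (φ₀ : E) (α₀ : ℝ) (hφ₀ : ℓ φ₀ = 1) (hSφ₀ : S φ₀ = α₀ • c)
    (Stilde : E →L[ℝ] F)
    (hStilde : ∀ φ : E, Stilde φ = S (φ - ℓ φ • φ₀) - ℓ φ • c)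
    (hneg : ∀ ψ : E, ψ ≠ 0 → ℓ ψ = 0 → B ψ (S ψ) < 0) :
    ∀ φ : E, φ ≠ 0 → B φ (Stilde φ) < 0 :=
  stmt_4_general S ℓ c B hsym hBc φ₀ α₀ hφ₀ hSφ₀ Stilde hStilde hneg
end

section
/- One has the Calderón identity S̃ ∘ K* = K ∘ S̃ for the modified operator S̃. -/
/-! S̃ is `S` minus the rank-one map `ℓ(·) • (S φ₀ + c)`. Both `S φ₀` (by the Calderón identity)
and `c` are `½`-eigenvectors of `K`, and `ℓ ∘ K* = ½ ℓ`, so the rank-one correction intertwines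
`K*` and `K` just as `S` does. -/

theorem intertwining_sub_smul_of_eigenvector {R M N : Type*}
    [CommRing R] [AddCommGroup N] [Module R N]
    (A : M → N) (T : M → M) (U : N →ₗ[R] N) (ℓ : M → R) (v : N) (μ : R)
    (hA : ∀ x, A (T x) = U (A x)) (hℓ : ∀ x, ℓ (T x) = μ * ℓ x) (hv : U v = μ • v) (x : M) :
    A (T x) - ℓ (T x) • v = U (A x - ℓ x • v) := by
  rw [map_sub, map_smul, hv, hA, hℓ, smul_smul, mul_comm]

theorem stmt_5_general
    {E F : Type*} [NormedAddCommGroup E] [NormedSpace ℂ E]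
    [NormedAddCommGroup F] [NormedSpace ℂ F]
    (S : E →L[ℂ] F) (ℓ : E →L[ℂ] ℂ) (c : F)
    (φ₀ : E)
    (Kstar : E →L[ℂ] E) (K : F →L[ℂ] F)
    (hcald : ∀ φ : E, S (Kstar φ) = K (S φ))
    (hKφ₀ : Kstar φ₀ = (1 / 2 : ℂ) • φ₀)
    (hKc : K c = (1 / 2 : ℂ) • c)
    (hℓK : ∀ φ : E, ℓ (Kstar φ) = (1 / 2 : ℂ) * ℓ φ)
    (Stilde : E →L[ℂ] F)
    (hStilde : ∀ φ : E, Stilde φ = S (φ - ℓ φ • φ₀) - ℓ φ • c) :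
    ∀ φ : E, Stilde (Kstar φ) = K (Stilde φ) := by
  have hStilde_rankOne : ∀ φ, Stilde φ = S φ - ℓ φ • (S φ₀ + c) := fun φ ↦ by
    rw [hStilde, map_sub, map_smul, smul_add, sub_sub]
  have hK_eigen : K (S φ₀ + c) = (1 / 2 : ℂ) • (S φ₀ + c) := by
    rw [map_add, ← hcald, hKφ₀, map_smul, hKc, smul_add]
  intro φ
  rw [hStilde_rankOne, hStilde_rankOne]
  exact intertwining_sub_smul_of_eigenvector S Kstar (K : F →ₗ[ℂ] F) ℓ _ _ hcald hℓK hK_eigen φ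

/-- The Calderón identity `S̃ ∘ K* = K ∘ S̃` holds for the modified operator
`S̃φ := S(φ − (ℓφ)•φ₀) − (ℓφ)•c`, given `S ∘ K* = K ∘ S`, `K*φ₀ = (1/2)•φ₀`,
`K c = (1/2)•c` and `ℓ(K*φ) = (1/2)ℓφ`. -/
theorem stmt_5
    {E F : Type*} [NormedAddCommGroup E] [NormedSpace ℂ E] [CompleteSpace E]
    [NormedAddCommGroup F] [NormedSpace ℂ F] [CompleteSpace F]
    (S : E →L[ℂ] F) (ℓ : E →L[ℂ] ℂ) (c : F)
    (φ₀ : E) (hφ₀ : ℓ φ₀ = 1)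
    (Kstar : E →L[ℂ] E) (K : F →L[ℂ] F)
    (hcald : ∀ φ : E, S (Kstar φ) = K (S φ))
    (hKφ₀ : Kstar φ₀ = (1 / 2 : ℂ) • φ₀)
    (hKc : K c = (1 / 2 : ℂ) • c)
    (hℓK : ∀ φ : E, ℓ (Kstar φ) = (1 / 2 : ℂ) * ℓ φ)
    (Stilde : E →L[ℂ] F)
    (hStilde : ∀ φ : E, Stilde φ = S (φ - ℓ φ • φ₀) - ℓ φ • c) :
    ∀ φ : E, Stilde (Kstar φ) = K (Stilde φ) :=
  stmt_5_general S ℓ c φ₀ Kstar K hcald hKφ₀ hKc hℓK Stilde hStilde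
end
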